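/- arXiv:0808.0167 — 3 statements merged into one kernel-verified Lean document; each statement's English description precedes it below -/
import Mathlib

section
/- Let n, k ≥ 1 and identify ℂⁿ × ℝᵏ with ℝ^{2n+k} as a real vector space. Let Γ ⊂ ℂⁿ × ℝᵏ be a lattice, i.e. the ℤ-span of an ℝ-basis of ℝ^{2n+k}, and let S ⊂ ℂⁿ be a countable set. Let f : ℂⁿ × ℝᵏ → ℂⁿ be a smooth map such that for each fixed t ∈ ℝᵏ the map z ↦ f(z, t) is holomorphic, and such that f(z + ζ, t + τ) − f(z, t) ∈ S for all (z, t) ∈ ℂⁿ × ℝᵏ and all (ζ, τ) ∈ Γ. Then there exist a complex n × n matrix A, an ℝ-linear map B : ℝᵏ → ℂⁿ, and a smooth map β : ℝᵏ → ℂⁿ satisfying β(t + τ) = β(t) for every t ∈ ℝᵏ and every τ in the projection of Γ to ℝᵏ, such that f(z, t) = A z + B t + β(t) for all (z, t). -/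
open Set

/-- A continuous map (on a real normed space) with values in a countable set is constant. -/
lemma aux_const_of_countable {E W : Type*} [NormedAddCommGroup E] [NormedSpace ℝ E]
    [NormedAddCommGroup W] {S : Set W} (hS : S.Countable)
    {u : E → W} (hu : Continuous u) (hmem : ∀ x, u x ∈ S) (x y : E) : u x = u y := by
  set v : ℝ → W := fun s => u (x + s • (y - x)) with hv_def
  have hv : Continuous v :=
    hu.comp (continuous_const.add (continuous_id.smul continuous_const))
  set w : ℝ → ℝ := fun s => ‖v s - v 0‖ with hw_def
  have hw : Continuous w := (hv.sub continuous_const).norm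
  have h0 : w 0 = 0 := by simp [hw_def]
  have hsub : Set.Icc (0 : ℝ) (w 1) ⊆ w '' Set.Icc 0 1 := by
    have := intermediate_value_Icc (by norm_num : (0:ℝ) ≤ 1) hw.continuousOn
    rwa [h0] at this
  have hcnt : (Set.Icc (0 : ℝ) (w 1)).Countable := by
    refine Set.Countable.mono hsub (Set.Countable.mono ?_ (hS.image (fun c => ‖c - v 0‖)))
    rintro _ ⟨s, _, rfl⟩
    exact ⟨v s, hmem _, rfl⟩
  have hle : w 1 ≤ 0 := by
    by_contra hlt
    push_neg at hlt
    have h2 : (Set.Ioo (0:ℝ) (w 1)).Countable := hcnt.mono Set.Ioo_subset_Icc_self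
    rw [← Cardinal.le_aleph0_iff_set_countable, Cardinal.mk_Ioo_real hlt] at h2
    exact not_le.mpr Cardinal.aleph0_lt_continuum h2
  have h1 : v 1 = v 0 := by
    have hw1 : w 1 = 0 := le_antisymm hle (norm_nonneg _)
    have : ‖v 1 - v 0‖ = 0 := hw1
    rw [norm_eq_zero, sub_eq_zero] at this
    exact this
  have e1 : v 1 = u y := by simp [hv_def]
  have e0 : v 0 = u x := by simp [hv_def]
  rw [← e0, ← e1, h1]

/-- An additive map with bounded range is zero. -/
lemma aux_additive_bounded_eq_zero {V W : Type*} [AddCommGroup V] [NormedAddCommGroup W]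
    [NormedSpace ℝ W] {Q : V → W} (hadd : ∀ a b, Q (a + b) = Q a + Q b)
    {C : ℝ} (hC : ∀ x, ‖Q x‖ ≤ C) (x : V) : Q x = 0 := by
  by_contra hx
  have hpos : 0 < ‖Q x‖ := norm_pos_iff.mpr hx
  obtain ⟨m, hm⟩ := exists_nat_gt (C / ‖Q x‖)
  have hQm : Q (m • x) = m • Q x := by
    simpa using map_nsmul (AddMonoidHom.mk' Q hadd) m x
  have hle : (m : ℝ) * ‖Q x‖ ≤ C := by
    calc (m : ℝ) * ‖Q x‖ = ‖(m : ℝ) • Q x‖ := by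
          rw [norm_smul, Real.norm_natCast]
      _ = ‖Q (m • x)‖ := by rw [Nat.cast_smul_eq_nsmul, ← hQm]
      _ ≤ C := hC _
  rw [div_lt_iff₀ hpos] at hm
  linarith

/-- **ℂⁿ-component of CR-maps between complex foliated tori.**
If `Γ` is a lattice in `ℂⁿ × ℝᵏ`, `S ⊂ ℂⁿ` is countable, and
`f : ℂⁿ × ℝᵏ → ℂⁿ` is smooth, holomorphic in `z` for each fixed `t`, with
`f (z + ζ, t + τ) - f (z, t) ∈ S` for all `(ζ, τ) ∈ Γ`, then
`f (z, t) = A z + B t + β t` with `A` a complex matrix, `B` real-linear and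
`β` smooth and periodic with respect to the projection of `Γ` to `ℝᵏ`. -/
theorem stmt_1 (n k : ℕ) (hn : 1 ≤ n) (hk : 1 ≤ k)
    (Γ : AddSubgroup ((Fin n → ℂ) × (Fin k → ℝ)))
    (hΓ : ∃ b : Module.Basis (Fin (2 * n + k)) ℝ ((Fin n → ℂ) × (Fin k → ℝ)),
      Γ = AddSubgroup.closure (Set.range b))
    (S : Set (Fin n → ℂ)) (hS : S.Countable)
    (f : (Fin n → ℂ) × (Fin k → ℝ) → (Fin n → ℂ))
    (hsmooth : ContDiff ℝ (⊤ : ℕ∞) f)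
    (hhol : ∀ t : Fin k → ℝ, Differentiable ℂ (fun z => f (z, t)))
    (hdiff : ∀ (z : Fin n → ℂ) (t : Fin k → ℝ) (ζ : Fin n → ℂ) (τ : Fin k → ℝ),
      (ζ, τ) ∈ Γ → f (z + ζ, t + τ) - f (z, t) ∈ S) :
    ∃ (A : Matrix (Fin n) (Fin n) ℂ) (B : (Fin k → ℝ) →ₗ[ℝ] (Fin n → ℂ))
      (β : (Fin k → ℝ) → (Fin n → ℂ)),
      ContDiff ℝ (⊤ : ℕ∞) β ∧
      (∀ (t τ : Fin k → ℝ), (∃ ζ : Fin n → ℂ, (ζ, τ) ∈ Γ) → β (t + τ) = β t) ∧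
      ∀ (z : Fin n → ℂ) (t : Fin k → ℝ), f (z, t) = A.mulVec z + B t + β t := by
  classical
  obtain ⟨b, hb⟩ := hΓ
  have hcf : Continuous f := hsmooth.continuous
  have hbΓ : ∀ i, b i ∈ Γ := fun i => hb ▸ AddSubgroup.subset_closure ⟨i, rfl⟩
  -- differences along Γ are constant
  have hconst : ∀ γ ∈ Γ, ∀ x : (Fin n → ℂ) × (Fin k → ℝ),
      f (x + γ) - f x = f γ - f 0 := by
    intro γ hγ x
    have hu : Continuous fun x : (Fin n → ℂ) × (Fin k → ℝ) => f (x + γ) - f x :=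
      (hcf.comp (continuous_id.add continuous_const)).sub hcf
    have hmem : ∀ x : (Fin n → ℂ) × (Fin k → ℝ), f (x + γ) - f x ∈ S := by
      intro x
      exact hdiff x.1 x.2 γ.1 γ.2 hγ
    have := aux_const_of_countable hS hu hmem x 0
    simpa using this
  -- the linear map L extending the difference homomorphism
  set L : ((Fin n → ℂ) × (Fin k → ℝ)) →ₗ[ℝ] (Fin n → ℂ) :=
    b.constr ℝ (fun i => f (b i) - f 0) with hLdef
  have hLb : ∀ i, L (b i) = f (b i) - f 0 := fun i => b.constr_basis ℝ _ i
  have hL : ∀ γ ∈ Γ, ∀ x, f (x + γ) = f x + L γ := by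
    intro γ hγ
    rw [hb] at hγ
    induction hγ using AddSubgroup.closure_induction with
    | mem γ' hγ' =>
        obtain ⟨i, rfl⟩ := hγ'
        intro x
        have h1 := hconst (b i) (hbΓ i) x
        rw [hLb i, ← h1]
        abel
    | zero => intro x; simp
    | add γ₁ γ₂ h₁ h₂ ih₁ ih₂ =>
        intro x
        calc f (x + (γ₁ + γ₂)) = f ((x + γ₂) + γ₁) := by
              rw [show x + (γ₁ + γ₂) = (x + γ₂) + γ₁ by abel]
          _ = f (x + γ₂) + L γ₁ := ih₁ _
          _ = f x + L γ₂ + L γ₁ := by rw [ih₂ x]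
          _ = f x + L (γ₁ + γ₂) := by rw [map_add]; abel
    | neg γ' h ih =>
        intro x
        have h1 := ih (x + -γ')
        rw [show x + -γ' + γ' = x by abel] at h1
        rw [map_neg, h1]
        abel
  -- periodic part g
  set g : ((Fin n → ℂ) × (Fin k → ℝ)) → (Fin n → ℂ) := fun x => f x - L x with hgdef
  have hfg : ∀ x, f x = g x + L x := fun x => by simp [hgdef]
  have hgper : ∀ γ ∈ Γ, ∀ x, g (x + γ) = g x := by
    intro γ hγ x
    simp only [hgdef]
    rw [hL γ hγ x, map_add]
    abel
  have hLc : Continuous L := L.continuous_of_finiteDimensional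
  have hgc : Continuous g := hcf.sub hLc
  -- boundedness of g
  obtain ⟨C, hC⟩ : ∃ C, ∀ x, ‖g x‖ ≤ C := by
    obtain ⟨C, hC⟩ := (isCompact_closedBall (0 : (Fin n → ℂ) × (Fin k → ℝ))
      (∑ i, ‖b i‖)).exists_bound_of_continuousOn hgc.continuousOn
    refine ⟨C, fun x => ?_⟩
    set γ : (Fin n → ℂ) × (Fin k → ℝ) := ∑ i, ⌊b.repr x i⌋ • b i with hγdef
    have hγΓ : γ ∈ Γ := sum_mem fun i _ => zsmul_mem (hbΓ i) _
    have hxγ : x - γ = ∑ i, Int.fract (b.repr x i) • b i := by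
      have hx : x = ∑ i, b.repr x i • b i := (b.sum_repr x).symm
      have hγ2 : γ = ∑ i, (⌊b.repr x i⌋ : ℝ) • b i := by
        rw [hγdef]
        exact Finset.sum_congr rfl fun i _ => (Int.cast_smul_eq_zsmul ℝ _ _).symm
      rw [hγ2]
      nth_rewrite 1 [hx]
      rw [← Finset.sum_sub_distrib]
      refine Finset.sum_congr rfl fun i _ => ?_
      rw [← sub_smul, Int.self_sub_floor]
    have hnorm : x - γ ∈ Metric.closedBall (0 : (Fin n → ℂ) × (Fin k → ℝ)) (∑ i, ‖b i‖) := by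
      rw [Metric.mem_closedBall, dist_zero_right, hxγ]
      refine (norm_sum_le _ _).trans ?_
      refine Finset.sum_le_sum fun i _ => ?_
      rw [norm_smul, Real.norm_eq_abs, abs_of_nonneg (Int.fract_nonneg _)]
      exact mul_le_of_le_one_left (norm_nonneg _) (Int.fract_lt_one _).le
    have hgx : g x = g (x - γ) := by
      have h2 := hgper γ hγΓ (x - γ)
      rw [show x - γ + γ = x by abel] at h2
      exact h2
    rw [hgx]
    exact hC _ hnorm
  -- Liouville step: translation differences in z are independent of z
  have key : ∀ (a z : Fin n → ℂ) (t : Fin k → ℝ),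
      f (z + a, t) - f (z, t) = f (a, t) - f (0, t) := by
    intro a z t
    set u : (Fin n → ℂ) → (Fin n → ℂ) := fun w => f (w + a, t) - f (w, t) with hudef
    have hud : Differentiable ℂ u := by
      have h1 : Differentiable ℂ fun w : Fin n → ℂ => f (w + a, t) :=
        (hhol t).comp (differentiable_id.add_const a)
      exact h1.sub (hhol t)
    have hub : Bornology.IsBounded (Set.range u) := by
      rw [isBounded_iff_forall_norm_le]
      refine ⟨C + C + ‖L (a, 0)‖, ?_⟩
      rintro _ ⟨w, rfl⟩
      have hLsplit : L ((w + a : Fin n → ℂ), t) = L (w, t) + L (a, 0) := by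
        rw [← map_add, show ((w, t) + ((a : Fin n → ℂ), (0 : Fin k → ℝ))
          : (Fin n → ℂ) × (Fin k → ℝ)) = (w + a, t) by simp [Prod.ext_iff]]
      have he : u w = g (w + a, t) - g (w, t) + L (a, 0) := by
        simp only [hudef]
        linear_combination hfg ((w + a : Fin n → ℂ), t) - hfg ((w : Fin n → ℂ), t) + hLsplit
      rw [he]
      have h1 := hC ((w + a : Fin n → ℂ), t)
      have h2 := hC ((w : Fin n → ℂ), t)
      calc ‖g (w + a, t) - g (w, t) + L (a, 0)‖
          ≤ ‖g (w + a, t) - g (w, t)‖ + ‖L (a, 0)‖ := norm_add_le _ _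
        _ ≤ (‖g (w + a, t)‖ + ‖g (w, t)‖) + ‖L (a, 0)‖ := by
            have := norm_sub_le (g ((w + a : Fin n → ℂ), t)) (g ((w : Fin n → ℂ), t))
            linarith
        _ ≤ C + C + ‖L (a, 0)‖ := by linarith
    have := hud.apply_eq_apply_of_bounded hub z 0
    simpa only [hudef, zero_add] using this
  -- f (z, t) - f (0, t) is independent of t
  have hzero : ∀ (z : Fin n → ℂ) (t : Fin k → ℝ),
      f (z, t) = f (0, t) + (f (z, 0) - f (0, 0)) := by
    intro z t
    set Q : (Fin n → ℂ) → (Fin n → ℂ) :=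
      fun w => (f (w, t) - f (0, t)) - (f (w, 0) - f (0, 0)) with hQdef
    have hQadd : ∀ a c, Q (a + c) = Q a + Q c := by
      intro a c
      have h1 := key c a t
      have h2 := key c a 0
      simp only [hQdef]
      linear_combination h1 - h2
    have hQbdd : ∀ w, ‖Q w‖ ≤ C + C + (C + C) := by
      intro w
      have hLz : L ((w : Fin n → ℂ), t) - L (0, t) - (L (w, 0) - L (0, 0)) = 0 := by
        rw [← map_sub, ← map_sub, ← map_sub,
          show (((w : Fin n → ℂ), t) - (0, t) - (((w : Fin n → ℂ), (0 : Fin k → ℝ)) - (0, 0))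
            : (Fin n → ℂ) × (Fin k → ℝ)) = 0 by simp [Prod.ext_iff], map_zero]
      have he : Q w = (g (w, t) - g (0, t)) - (g (w, 0) - g (0, 0)) := by
        simp only [hQdef]
        linear_combination hfg ((w : Fin n → ℂ), t) - hfg ((0 : Fin n → ℂ), t)
          - hfg ((w : Fin n → ℂ), (0 : Fin k → ℝ))
          + hfg ((0 : Fin n → ℂ), (0 : Fin k → ℝ)) + hLz
      rw [he]
      have h1 := hC ((w : Fin n → ℂ), t)
      have h2 := hC ((0 : Fin n → ℂ), t)
      have h3 := hC ((w : Fin n → ℂ), (0 : Fin k → ℝ))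
      have h4 := hC ((0 : Fin n → ℂ), (0 : Fin k → ℝ))
      calc ‖(g (w, t) - g (0, t)) - (g (w, 0) - g (0, 0))‖
          ≤ ‖g (w, t) - g (0, t)‖ + ‖g (w, 0) - g (0, 0)‖ := norm_sub_le _ _
        _ ≤ (‖g (w, t)‖ + ‖g (0, t)‖) + (‖g (w, 0)‖ + ‖g (0, 0)‖) :=
            add_le_add (norm_sub_le _ _) (norm_sub_le _ _)
        _ ≤ C + C + (C + C) := by linarith
    have hQz := aux_additive_bounded_eq_zero hQadd hQbdd z
    simp only [hQdef] at hQz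
    linear_combination hQz
  -- the z-part agrees with L
  have hhL : ∀ ζ : Fin n → ℂ, f (ζ, 0) - f (0, 0) = L (ζ, 0) := by
    intro ζ
    set P : (Fin n → ℂ) → (Fin n → ℂ) := fun w => f (w, 0) - f (0, 0) - L (w, 0) with hPdef
    have hPadd : ∀ a c, P (a + c) = P a + P c := by
      intro a c
      have h2 := key c a 0
      have hLz : L ((a + c : Fin n → ℂ), (0 : Fin k → ℝ)) = L (a, 0) + L (c, 0) := by
        rw [← map_add, show (((a : Fin n → ℂ), (0 : Fin k → ℝ)) + (c, 0)
          : (Fin n → ℂ) × (Fin k → ℝ)) = (a + c, 0) by simp [Prod.ext_iff]]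
      simp only [hPdef]
      linear_combination h2 - hLz
    have hPbdd : ∀ w, ‖P w‖ ≤ C + C := by
      intro w
      have h0 : L ((0 : Fin n → ℂ), (0 : Fin k → ℝ)) = 0 := by
        rw [show (((0 : Fin n → ℂ), (0 : Fin k → ℝ))
          : (Fin n → ℂ) × (Fin k → ℝ)) = 0 from rfl, map_zero]
      have he : P w = g (w, 0) - g (0, 0) := by
        simp only [hPdef]
        linear_combination hfg ((w : Fin n → ℂ), (0 : Fin k → ℝ))
          - hfg ((0 : Fin n → ℂ), (0 : Fin k → ℝ)) - h0
      rw [he]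
      exact (norm_sub_le _ _).trans (add_le_add (hC _) (hC _))
    have hPz := aux_additive_bounded_eq_zero hPadd hPbdd ζ
    simp only [hPdef] at hPz
    linear_combination hPz
  -- the z-part is complex linear
  set h : (Fin n → ℂ) → (Fin n → ℂ) := fun z => f (z, 0) - f (0, 0) with hhdef
  have hhadd : ∀ a c, h (a + c) = h a + h c := by
    intro a c
    simp only [hhdef]
    linear_combination key c a 0
  have hhcont : Continuous h :=
    (hcf.comp (continuous_id.prodMk continuous_const)).sub continuous_const
  have hhdiff : Differentiable ℂ h := (hhol 0).sub_const _
  set D : (Fin n → ℂ) →L[ℂ] (Fin n → ℂ) := fderiv ℂ h 0 with hDdef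
  have hhD : ∀ z, h z = D z := by
    set Tl := (AddMonoidHom.mk' h hhadd).toRealLinearMap hhcont with hTl
    have hTc : ⇑Tl = h := by
      rw [hTl]
      rfl
    have hfd1 : HasFDerivAt h (Tl : (Fin n → ℂ) →L[ℝ] (Fin n → ℂ)) 0 := by
      have := Tl.hasFDerivAt (x := (0 : Fin n → ℂ))
      rwa [hTc] at this
    have hfd2 : HasFDerivAt h (D.restrictScalars ℝ) 0 :=
      ((hhdiff 0).hasFDerivAt).restrictScalars ℝ
    have hTD : Tl = D.restrictScalars ℝ := hfd1.unique hfd2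
    intro z
    calc h z = Tl z := (congrFun hTc z).symm
      _ = D z := by rw [hTD]; rfl
  -- assemble the data
  refine ⟨LinearMap.toMatrix' (D : (Fin n → ℂ) →ₗ[ℂ] (Fin n → ℂ)),
    L.comp (LinearMap.inr ℝ (Fin n → ℂ) (Fin k → ℝ)),
    fun t => f (0, t) - L (0, t), ?_, ?_, ?_⟩
  · -- smoothness of β
    have h1 : ContDiff ℝ (⊤ : ℕ∞) fun t : Fin k → ℝ => f (0, t) :=
      hsmooth.comp (contDiff_const.prodMk contDiff_id)
    have h2 : ContDiff ℝ (⊤ : ℕ∞) fun t : Fin k → ℝ => L (0, t) := by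
      have he : (fun t : Fin k → ℝ => L (0, t)) =
          ⇑(LinearMap.toContinuousLinearMap
            (L.comp (LinearMap.inr ℝ (Fin n → ℂ) (Fin k → ℝ)))) := rfl
      rw [he]
      exact ContinuousLinearMap.contDiff _
    exact h1.sub h2
  · -- periodicity of β
    rintro t τ ⟨ζ, hζτ⟩
    have h1 := hL (ζ, τ) hζτ (-ζ, t)
    rw [show ((-ζ, t) + (ζ, τ) : (Fin n → ℂ) × (Fin k → ℝ)) = (0, t + τ)
      by simp [Prod.ext_iff]] at h1
    have h2 := hzero (-ζ) t
    have h3 := hhL (-ζ)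
    have hLsum : L ((-ζ : Fin n → ℂ), (0 : Fin k → ℝ)) + L (ζ, τ) = L (0, τ) := by
      rw [← map_add, show (((-ζ : Fin n → ℂ), (0 : Fin k → ℝ)) + (ζ, τ)
        : (Fin n → ℂ) × (Fin k → ℝ)) = (0, τ) by simp [Prod.ext_iff]]
    have hLt : L ((0 : Fin n → ℂ), t + τ) = L (0, t) + L (0, τ) := by
      rw [← map_add, show (((0 : Fin n → ℂ), t) + ((0 : Fin n → ℂ), τ)
        : (Fin n → ℂ) × (Fin k → ℝ)) = (0, t + τ) by simp [Prod.ext_iff]]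
    linear_combination h1 + h2 + h3 + hLsum - hLt
  · -- the formula
    intro z t
    have hA : (LinearMap.toMatrix' ((D : (Fin n → ℂ) →ₗ[ℂ] (Fin n → ℂ)))).mulVec z = D z := by
      rw [← Matrix.toLin'_apply, Matrix.toLin'_toMatrix']
      rfl
    have hDz : f (z, 0) - f (0, 0) = D z := hhD z
    have hB : (L.comp (LinearMap.inr ℝ (Fin n → ℂ) (Fin k → ℝ))) t = L (0, t) := rfl
    rw [hA, hB]
    linear_combination hzero z t + hDz
end

section
/- Let k ≥ 1, let Λ ⊂ ℝᵏ be a lattice (the ℤ-span of an ℝ-basis of ℝᵏ), and let S ⊂ ℝᵏ be a countable set. Let h : ℝᵏ → ℝᵏ be a continuous map such that h(t + τ) − h(t) ∈ S for all t ∈ ℝᵏ and all τ ∈ Λ. Then there exist an ℝ-linear map C : ℝᵏ → ℝᵏ and a continuous map γ : ℝᵏ → ℝᵏ with γ(t + τ) = γ(t) for all t ∈ ℝᵏ, τ ∈ Λ, such that h(t) = C t + γ(t) for all t ∈ ℝᵏ. -/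
/-!
For `τ ∈ Λ` the continuous map `t ↦ h (t + τ) - h t` takes values in the countable, hence totally
disconnected, set `S`, so it is constant, equal to `h τ - h 0`. Let `C` be the linear map sending each
basis vector `bᵢ` of `Λ` to `h bᵢ - h 0`. Then every `bᵢ` is a period of `h - C`, and the periods of a
function form a subgroup, so `h - C` is `Λ`-periodic.
-/

theorem Continuous.eq_of_forall_mem_countable {X Y : Type*} [TopologicalSpace X]
    [PreconnectedSpace X] [MetricSpace Y] {g : X → Y} (hg : Continuous g) {S : Set Y}
    (hS : S.Countable) (hgS : ∀ x, g x ∈ S) (x y : X) : g x = g y :=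
  hS.isTotallyDisconnected (Set.range g) (Set.range_subset_iff.2 hgS) (isPreconnected_range hg)
    (Set.mem_range_self x) (Set.mem_range_self y)

theorem Continuous.map_add_sub_eq_of_countable {E F : Type*} [AddGroup E] [TopologicalSpace E]
    [ContinuousAdd E] [PreconnectedSpace E] [NormedAddCommGroup F] {h : E → F}
    (hh : Continuous h) {S : Set F} (hS : S.Countable) {τ : E}
    (hτ : ∀ t, h (t + τ) - h t ∈ S) (t : E) : h (t + τ) - h t = h τ - h 0 := by
  have hdiff : Continuous fun t => h (t + τ) - h t :=
    (hh.comp (continuous_add_const τ)).sub hh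
  simpa using hdiff.eq_of_forall_mem_countable hS hτ t 0

theorem Function.Periodic.of_mem_addSubgroupClosure {α β : Type*} [AddGroup α] {f : α → β}
    {s : Set α} (hs : ∀ c ∈ s, Periodic f c) {c : α} (hc : c ∈ AddSubgroup.closure s) :
    Periodic f c := by
  induction hc using AddSubgroup.closure_induction with
  | mem c hc => exact hs c hc
  | zero => exact fun x => by rw [add_zero]
  | add c d _ _ hc hd => exact hc.add_period hd
  | neg c _ hc => exact hc.neg

theorem stmt_2_general (k : ℕ)
    (Λ : AddSubgroup (Fin k → ℝ))
    (hΛ : ∃ b : Module.Basis (Fin k) ℝ (Fin k → ℝ), Λ = AddSubgroup.closure (Set.range b))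
    (S : Set (Fin k → ℝ)) (hS : S.Countable)
    (h : (Fin k → ℝ) → (Fin k → ℝ))
    (hcont : Continuous h)
    (hdiff : ∀ (t : Fin k → ℝ), ∀ τ ∈ Λ, h (t + τ) - h t ∈ S) :
    ∃ (C : (Fin k → ℝ) →ₗ[ℝ] (Fin k → ℝ)) (γ : (Fin k → ℝ) → (Fin k → ℝ)),
      Continuous γ ∧
      (∀ (t : Fin k → ℝ), ∀ τ ∈ Λ, γ (t + τ) = γ t) ∧
      ∀ t : Fin k → ℝ, h t = C t + γ t := by
  obtain ⟨b, rfl⟩ := hΛ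
  set C := b.constr ℝ fun i => h (b i) - h 0
  refine ⟨C, h - C, hcont.sub C.continuous_of_finiteDimensional, ?_, fun t => ?_⟩
  · refine fun t τ hτ => Function.Periodic.of_mem_addSubgroupClosure ?_ hτ t
    rintro _ ⟨i, rfl⟩ t
    have hshift := hcont.map_add_sub_eq_of_countable hS
      (fun t => hdiff t (b i) (AddSubgroup.subset_closure ⟨i, rfl⟩)) t
    have hCb : C (b i) = h (b i) - h 0 := b.constr_basis ℝ _ i
    simp only [Pi.sub_apply, map_add, hCb]
    rw [← hshift]
    abel
  · simp

/-- **ℝᵏ-component of CR-maps between complex foliated tori.**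
If `Λ ⊂ ℝᵏ` is a lattice, `S ⊂ ℝᵏ` is countable, and `h : ℝᵏ → ℝᵏ` is a
continuous map with `h (t + τ) - h t ∈ S` for all `t` and all `τ ∈ Λ`, then
`h t = C t + γ t` with `C` linear and `γ` continuous and `Λ`-periodic. -/
theorem stmt_2 (k : ℕ) (hk : 1 ≤ k)
    (Λ : AddSubgroup (Fin k → ℝ))
    (hΛ : ∃ b : Module.Basis (Fin k) ℝ (Fin k → ℝ), Λ = AddSubgroup.closure (Set.range b))
    (S : Set (Fin k → ℝ)) (hS : S.Countable)
    (h : (Fin k → ℝ) → (Fin k → ℝ))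
    (hcont : Continuous h)
    (hdiff : ∀ (t : Fin k → ℝ), ∀ τ ∈ Λ, h (t + τ) - h t ∈ S) :
    ∃ (C : (Fin k → ℝ) →ₗ[ℝ] (Fin k → ℝ)) (γ : (Fin k → ℝ) → (Fin k → ℝ)),
      Continuous γ ∧
      (∀ (t : Fin k → ℝ), ∀ τ ∈ Λ, γ (t + τ) = γ t) ∧
      ∀ t : Fin k → ℝ, h t = C t + γ t :=
  stmt_2_general k Λ hΛ S hS h hcont hdiff
end

section
/- Let n, k ≥ 1 and identify ℂⁿ × ℝᵏ with ℝ^{2n+k}. Let Γ ⊂ ℂⁿ × ℝᵏ be a lattice (the ℤ-span of an ℝ-basis of ℝ^{2n+k}). Then there exists a real-linear automorphism M of ℂⁿ × ℝᵏ of the form M(z, t) = (A z + B t, C t), with A a unitary n × n complex matrix, B a complex n × k matrix, and C ∈ GL(k, ℝ), such that the lattice M(Γ) admits a ℤ-basis whose last k elements are (0, e₁), …, (0, e_k), where e₁, …, e_k is the standard basis of ℝᵏ. -/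
/-!
The second components of a basis of `E × Kᵏ` span `Kᵏ`, so `k` of the basis vectors, say
`(ζⱼ, τⱼ)`, have second components `τⱼ` forming a basis of `Kᵏ`. If `φ` is the coordinate map of
that basis and `L` the linear map with `L τⱼ = -ζⱼ`, the shear `(x, y) ↦ (x + L y, φ y)` sends
`(ζⱼ, τⱼ)` to `(0, eⱼ)`; permuting the lattice basis moves these vectors to the last `k` slots.
The unitary part can be taken to be the identity.
-/

open Function Module Matrix

theorem exists_basis_eq_comp_of_span_eq_top {K V ι ι' : Type*} [DivisionRing K] [AddCommGroup V]
    [Module K V] [Module.Finite K V] [Finite ι'] (v : ι → V)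
    (hv : Submodule.span K (Set.range v) = ⊤) (hcard : finrank K V = Nat.card ι') :
    ∃ (g : ι' → ι) (β : Basis ι' K V), ⇑β = v ∘ g := by
  obtain ⟨κ, a, -, hspan, hli⟩ := exists_linearIndependent' K v
  let β := Basis.mk hli (by rw [hspan, hv])
  have := Module.Finite.finite_basis β
  obtain ⟨e⟩ := Finite.card_eq.mp ((finrank_eq_nat_card_basis β).symm.trans hcard)
  exact ⟨a ∘ e.symm, β.reindex e, funext fun i => by simp [β]⟩

theorem Matrix.exists_mulVec_algebraMap_eq {R A l m : Type*} [CommSemiring R] [Semiring A]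
    [Algebra R A] [Fintype m] [DecidableEq m] (L : (m → R) →ₗ[R] (l → A)) :
    ∃ B : Matrix l m A, ∀ t, B *ᵥ (fun j => algebraMap R A (t j)) = L t := by
  refine ⟨Matrix.of fun i j => L (Pi.single j 1) i, fun t => funext fun i => ?_⟩
  conv_rhs => rw [← Finset.univ_sum_single t]
  simp only [mulVec, dotProduct, of_apply, map_sum, Finset.sum_apply]
  refine Finset.sum_congr rfl fun j _ => ?_
  rw [← Algebra.commutes, ← Algebra.smul_def, ← Pi.smul_apply, ← map_smul, ← Pi.single_smul',
    smul_eq_mul, mul_one]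

namespace LinearEquiv

variable {R E F : Type*} [Semiring R] [AddCommGroup E] [AddCommMonoid F] [Module R E] [Module R F]

def prodShear (L : F →ₗ[R] E) (φ : F ≃ₗ[R] F) : (E × F) ≃ₗ[R] (E × F) :=
  (prodComm R E F).trans ((φ.skewProd (refl R E) L).trans (prodComm R F E))

@[simp]
theorem prodShear_apply (L : F →ₗ[R] E) (φ : F ≃ₗ[R] F) (x : E) (y : F) :
    prodShear L φ (x, y) = (x + L y, φ y) :=
  rfl

end LinearEquiv

theorem exists_prodShear_basis_eq_single {K E ι ι' : Type*} [Field K] [AddCommGroup E] [Module K E]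
    [Fintype ι'] [DecidableEq ι'] (b : Basis ι K (E × (ι' → K))) :
    ∃ (L : (ι' → K) →ₗ[K] E) (φ : (ι' → K) ≃ₗ[K] (ι' → K)) (g : ι' → ι), Injective g ∧
      ∀ j, LinearEquiv.prodShear L φ (b (g j)) = (0, Pi.single j 1) := by
  have hspan : Submodule.span K (Set.range fun i => (b i).2) = ⊤ := by
    have h := Submodule.map_span (LinearMap.snd K E (ι' → K)) (Set.range b)
    rwa [b.span_eq, Submodule.map_top, LinearMap.range_eq_top.mpr LinearMap.snd_surjective,
      ← Set.range_comp, eq_comm] at h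
  obtain ⟨g, β, hβ⟩ := exists_basis_eq_comp_of_span_eq_top (ι' := ι') _ hspan (by simp)
  have hβg (j : ι') : (b (g j)).2 = β j := (congrFun hβ j).symm
  refine ⟨β.constr K fun j => -(b (g j)).1, β.equivFun, g, ?_, fun j => ?_⟩
  · exact .of_comp (f := fun i => (b i).2) (hβ ▸ β.linearIndependent.injective)
  · rw [← Prod.mk.eta (p := b (g j)), LinearEquiv.prodShear_apply, hβg, β.constr_basis]
    simp [Finsupp.single_eq_pi_single]

theorem stmt_4_general (n k : ℕ) (Γ : AddSubgroup ((Fin n → ℂ) × (Fin k → ℝ)))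
    (hΓ : ∃ b : Module.Basis (Fin (2 * n + k)) ℝ ((Fin n → ℂ) × (Fin k → ℝ)),
      Γ = AddSubgroup.closure (Set.range b)) :
    ∃ (A : Matrix (Fin n) (Fin n) ℂ) (B : Matrix (Fin n) (Fin k) ℂ)
      (C : Matrix (Fin k) (Fin k) ℝ)
      (M : ((Fin n → ℂ) × (Fin k → ℝ)) ≃ₗ[ℝ] ((Fin n → ℂ) × (Fin k → ℝ))),
      A ∈ Matrix.unitaryGroup (Fin n) ℂ ∧
      IsUnit C.det ∧
      (∀ (z : Fin n → ℂ) (t : Fin k → ℝ),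
        M (z, t) = (A.mulVec z + B.mulVec (fun i => (t i : ℂ)), C.mulVec t)) ∧
      ∃ v : Fin (2 * n + k) → ((Fin n → ℂ) × (Fin k → ℝ)),
        LinearIndependent ℤ v ∧
        AddSubgroup.closure (Set.range v) =
          Γ.map (M : ((Fin n → ℂ) × (Fin k → ℝ)) →ₗ[ℝ] ((Fin n → ℂ) × (Fin k → ℝ))).toAddMonoidHom ∧
        ∀ i : Fin k, v (Fin.natAdd (2 * n) i) = (0, Pi.single i 1) := by
  obtain ⟨b, rfl⟩ := hΓ
  obtain ⟨L, φ, g, hg, hbg⟩ := exists_prodShear_basis_eq_single b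
  obtain ⟨B, hB⟩ := Matrix.exists_mulVec_algebraMap_eq L
  obtain ⟨σ, hσ⟩ := Equiv.Perm.exists_extending_pair _ g (Fin.natAdd_injective k (2 * n)) hg
  let M := LinearEquiv.prodShear L φ
  refine ⟨1, B, LinearMap.toMatrix' φ, M, one_mem _, ?_, fun z t => ?_,
    (b.reindex σ.symm).map M, ?_, ?_, fun j => ?_⟩
  · rw [LinearMap.det_toMatrix']
    exact φ.isUnit_det'
  · simp [M, ← hB, LinearMap.toMatrix'_mulVec]
  · exact ((b.reindex σ.symm).map M).linearIndependent.restrict_scalars' ℤ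
  · rw [AddMonoidHom.map_closure, Basis.coe_map, Set.range_comp, Basis.range_reindex]
    rfl
  · rw [Basis.map_apply, Basis.reindex_apply, Equiv.symm_symm, hσ]
    exact hbg j

/-- **Existence of adapted period matrices.**
Every lattice `Γ ⊂ ℂⁿ × ℝᵏ` can be carried, by an automorphism
`M(z, t) = (A z + B t, C t)` with `A` unitary, `B ∈ M_{n,k}(ℂ)` and
`C ∈ GL(k, ℝ)`, onto a lattice admitting a `ℤ`-basis whose last `k` elements
are `(0, e₁), …, (0, e_k)`. -/
theorem stmt_4 (n k : ℕ) (hn : 1 ≤ n) (hk : 1 ≤ k)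
    (Γ : AddSubgroup ((Fin n → ℂ) × (Fin k → ℝ)))
    (hΓ : ∃ b : Module.Basis (Fin (2 * n + k)) ℝ ((Fin n → ℂ) × (Fin k → ℝ)),
      Γ = AddSubgroup.closure (Set.range b)) :
    ∃ (A : Matrix (Fin n) (Fin n) ℂ) (B : Matrix (Fin n) (Fin k) ℂ)
      (C : Matrix (Fin k) (Fin k) ℝ)
      (M : ((Fin n → ℂ) × (Fin k → ℝ)) ≃ₗ[ℝ] ((Fin n → ℂ) × (Fin k → ℝ))),
      A ∈ Matrix.unitaryGroup (Fin n) ℂ ∧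
      IsUnit C.det ∧
      (∀ (z : Fin n → ℂ) (t : Fin k → ℝ),
        M (z, t) = (A.mulVec z + B.mulVec (fun i => (t i : ℂ)), C.mulVec t)) ∧
      ∃ v : Fin (2 * n + k) → ((Fin n → ℂ) × (Fin k → ℝ)),
        LinearIndependent ℤ v ∧
        AddSubgroup.closure (Set.range v) =
          Γ.map (M : ((Fin n → ℂ) × (Fin k → ℝ)) →ₗ[ℝ] ((Fin n → ℂ) × (Fin k → ℝ))).toAddMonoidHom ∧
        ∀ i : Fin k, v (Fin.natAdd (2 * n) i) = (0, Pi.single i 1) :=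
  stmt_4_general n k Γ hΓ
end
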